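/- arXiv:1511.02770 — 6 statements merged into one kernel-verified Lean document; each statement's English description precedes it below -/
import Mathlib

section
/- Let λ > 0, ℓ > 0 and β > 0, and set a = exp(−βλℓ). The mapping x_β(q) = ℓ + (1/(βλ))·ln(q + (1 − q)·a), defined for q ∈ [0, 1], satisfies x_β(0) = 0 and x_β(1) = ℓ, and satisfies the equidistribution identity (λ·exp(λ(x_β(q) − ℓ)))^β · x_β'(q) = λ^{β−1}·(1 − a)/β for all q ∈ [0, 1], i.e. the monitor function ω_β(x) = (u'(x))^β with u(x) = exp(λ(x − ℓ)) is equidistributed by x_β. -/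
/-! Writing `s q = q + (1 - q) a`, which is positive on `[0, 1]` because `a > 0`, the map is
`x q = ℓ + log (s q) / (β λ)`. Hence `exp (λ (x q - ℓ)) ^ β = s q`, so `ω_β (x q) = λ^β s q`,
while `x' q = (1 - a) / (β λ s q)`: the factor `s q` cancels in the product. -/

open Real Set

lemma add_one_sub_mul_pos {a q : ℝ} (ha : 0 < a) (hq : q ∈ Icc (0 : ℝ) 1) :
    0 < q + (1 - q) * a := by
  obtain ⟨hq0, hq1⟩ := hq
  rcases le_total a 1 with h | h <;>
    nlinarith [mul_nonneg hq0 (sub_nonneg.2 h), mul_nonneg (sub_nonneg.2 hq1) (sub_nonneg.2 h)]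

lemma hasDerivAt_const_add_mul_log_add_one_sub_mul {a c ℓ q : ℝ}
    (hs : 0 < q + (1 - q) * a) :
    HasDerivAt (fun q => ℓ + c * log (q + (1 - q) * a))
      (c * (1 - a) / (q + (1 - q) * a)) q := by
  have hlin : HasDerivAt (fun q => q + (1 - q) * a) (1 + -1 * a) q :=
    (hasDerivAt_id q).add (((hasDerivAt_id q).const_sub 1).mul_const a)
  rw [mul_div_assoc, sub_eq_add_neg, ← neg_one_mul]
  exact ((hlin.log hs.ne').const_mul c).const_add ℓ

lemma mul_exp_mul_log_div_rpow {lam β s : ℝ} (hlam : 0 < lam) (hβ : β ≠ 0) (hs : 0 < s) :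
    (lam * exp (lam * (1 / (β * lam) * log s))) ^ β = lam ^ β * s := by
  have hexp : exp (lam * (1 / (β * lam) * log s)) ^ β = s := by
    rw [← exp_mul, show lam * (1 / (β * lam) * log s) * β = log s by field_simp, exp_log hs]
  rw [mul_rpow hlam.le (exp_pos _).le, hexp]

theorem stmt_5_general (lam ℓ β : ℝ) (hlam : 0 < lam) (hβ : 0 < β)
    (a : ℝ) (ha : a = Real.exp (-(β * lam * ℓ)))
    (x : ℝ → ℝ)
    (hx : x = fun q : ℝ => ℓ + 1 / (β * lam) * Real.log (q + (1 - q) * a)) :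
    x 0 = 0 ∧ x 1 = ℓ ∧
      ∀ q ∈ Set.Icc (0 : ℝ) 1,
        (lam * Real.exp (lam * (x q - ℓ))) ^ β * deriv x q
          = lam ^ (β - 1) * (1 - a) / β := by
  subst hx
  refine ⟨?_, by simp, fun q hq => ?_⟩
  · simp only [ha, zero_add, sub_zero, one_mul, log_exp]
    field_simp
    ring
  · have hs := add_one_sub_mul_pos (ha ▸ exp_pos _) hq
    rw [(hasDerivAt_const_add_mul_log_add_one_sub_mul hs).deriv, add_sub_cancel_left,
      mul_exp_mul_log_div_rpow hlam hβ.ne' hs, rpow_sub_one hlam.ne']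
    field_simp

/-- for λ, ℓ, β > 0 and a = exp(−βλℓ), the mapping
x_β(q) = ℓ + (1/(βλ))·ln(q + (1 − q)·a) satisfies x_β(0) = 0, x_β(1) = ℓ and the
equidistribution identity (λ·exp(λ(x_β(q) − ℓ)))^β · x_β'(q) = λ^{β−1}·(1 − a)/β
for all q ∈ [0, 1]. -/
theorem stmt_5 (lam ℓ β : ℝ) (hlam : 0 < lam) (hℓ : 0 < ℓ) (hβ : 0 < β)
    (a : ℝ) (ha : a = Real.exp (-(β * lam * ℓ)))
    (x : ℝ → ℝ)
    (hx : x = fun q : ℝ => ℓ + 1 / (β * lam) * Real.log (q + (1 - q) * a)) :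
    x 0 = 0 ∧ x 1 = ℓ ∧
      ∀ q ∈ Set.Icc (0 : ℝ) 1,
        (lam * Real.exp (lam * (x q - ℓ))) ^ β * deriv x q
          = lam ^ (β - 1) * (1 - a) / β :=
  stmt_5_general lam ℓ β hlam hβ a ha x hx
end

section
/- Let a < b, δ > 0 with b − a > 2δ, and let u : [a, b] → ℝ be six times continuously differentiable. There exists a constant C > 0 such that for all x ∈ [a + δ, b − δ] and all step sizes h₊, h₋ ∈ (0, δ], the non-uniform central second difference D := [ (u(x+h₊) − u(x))/h₊ − (u(x) − u(x−h₋))/h₋ ] / ((h₊ + h₋)/2) satisfies |D − u''(x) − ((h₊ − h₋)/3)·u'''(x) − ((h₊² − h₊h₋ + h₋²)/12)·u''''(x) − ((h₊ − h₋)(h₊² + h₋²)/60)·u⁽⁵⁾(x)| ≤ C·max(h₊, h₋)⁴. -/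
open Set

lemma taylor_bound_two_sided {f : ℝ → ℝ} {a b C x x₀ : ℝ} {n : ℕ} (hab : a < b)
    (hf : ContDiffOn ℝ (n + 1) f (Set.Icc a b)) (hx : x ∈ Set.Icc a b) (hx₀ : x₀ ∈ Set.Icc a b)
    (hC : ∀ y ∈ Set.Icc a b, |iteratedDerivWithin (n + 1) f (Set.Icc a b) y| ≤ C) :
    |f x - taylorWithinEval f n (Set.Icc a b) x₀ x| ≤ C * |x - x₀| ^ (n + 1) / n.factorial := by
  have hf' : DifferentiableOn ℝ (iteratedDerivWithin n f (Icc a b)) (Icc a b) :=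
    hf.differentiableOn_iteratedDerivWithin (mod_cast n.lt_succ_self) (uniqueDiffOn_Icc hab)
  have hC0 : 0 ≤ C := le_trans (abs_nonneg _) (hC x₀ hx₀)
  have hfac : (0:ℝ) < n.factorial := by exact_mod_cast n.factorial_pos
  rcases le_total x₀ x with hle | hle
  · have I : Icc x₀ x ⊆ Icc a b := Icc_subset_Icc hx₀.1 hx.2
    have A : ∀ t ∈ Icc x₀ x, HasDerivWithinAt (fun y => taylorWithinEval f n (Icc a b) y x)
        (((n.factorial : ℝ)⁻¹ * (x - t) ^ n) • iteratedDerivWithin (n + 1) f (Icc a b) t)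
        (Icc x₀ x) t :=
      fun t ht => (hasDerivWithinAt_taylorWithinEval_at_Icc x hab (I ht) hf.of_succ hf').mono I
    have h' : ∀ y ∈ Ico x₀ x,
        ‖((n.factorial : ℝ)⁻¹ * (x - y) ^ n) • iteratedDerivWithin (n + 1) f (Icc a b) y‖ ≤
          (n.factorial : ℝ)⁻¹ * |x - x₀| ^ n * C := by
      intro y hy
      rw [norm_smul, Real.norm_eq_abs, Real.norm_eq_abs, abs_mul, abs_inv, Nat.abs_cast, abs_pow]
      have h1 : |x - y| ≤ |x - x₀| := by
        rw [abs_of_nonneg (by linarith [hy.2] : (0:ℝ) ≤ x - y),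
          abs_of_nonneg (by linarith : (0:ℝ) ≤ x - x₀)]
        linarith [hy.1]
      gcongr
      exact hC y (I ⟨hy.1, hy.2.le⟩)
    have key := norm_image_sub_le_of_norm_deriv_le_segment' A h' x (right_mem_Icc.2 hle)
    simp only [taylorWithinEval_self, Real.norm_eq_abs] at key
    have : |x - x₀| = x - x₀ := abs_of_nonneg (by linarith)
    rw [this] at key
    calc |f x - taylorWithinEval f n (Icc a b) x₀ x|
        ≤ (n.factorial : ℝ)⁻¹ * (x - x₀) ^ n * C * (x - x₀) := key
      _ = C * |x - x₀| ^ (n + 1) / n.factorial := by rw [this]; field_simp; ring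
  · have I : Icc x x₀ ⊆ Icc a b := Icc_subset_Icc hx.1 hx₀.2
    have A : ∀ t ∈ Icc x x₀, HasDerivWithinAt (fun y => taylorWithinEval f n (Icc a b) y x)
        (((n.factorial : ℝ)⁻¹ * (x - t) ^ n) • iteratedDerivWithin (n + 1) f (Icc a b) t)
        (Icc x x₀) t :=
      fun t ht => (hasDerivWithinAt_taylorWithinEval_at_Icc x hab (I ht) hf.of_succ hf').mono I
    have h' : ∀ y ∈ Ico x x₀,
        ‖((n.factorial : ℝ)⁻¹ * (x - y) ^ n) • iteratedDerivWithin (n + 1) f (Icc a b) y‖ ≤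
          (n.factorial : ℝ)⁻¹ * |x - x₀| ^ n * C := by
      intro y hy
      rw [norm_smul, Real.norm_eq_abs, Real.norm_eq_abs, abs_mul, abs_inv, Nat.abs_cast, abs_pow]
      have h1 : |x - y| ≤ |x - x₀| := by
        rw [abs_sub_comm, abs_of_nonneg (by linarith [hy.1] : (0:ℝ) ≤ y - x),
          abs_sub_comm, abs_of_nonneg (by linarith : (0:ℝ) ≤ x₀ - x)]
        linarith [hy.2]
      gcongr
      exact hC y (I ⟨hy.1, hy.2.le⟩)
    have key := norm_image_sub_le_of_norm_deriv_le_segment' A h' x₀ (right_mem_Icc.2 hle)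
    simp only [taylorWithinEval_self, Real.norm_eq_abs] at key
    have habs : |x - x₀| = x₀ - x := by rw [abs_sub_comm]; exact abs_of_nonneg (by linarith)
    rw [abs_sub_comm]
    calc |taylorWithinEval f n (Icc a b) x₀ x - f x|
        ≤ (n.factorial : ℝ)⁻¹ * |x - x₀| ^ n * C * (x₀ - x) := key
      _ = C * |x - x₀| ^ (n + 1) / n.factorial := by rw [← habs]; field_simp; ring

lemma taylor_expand6 (u : ℝ → ℝ) (s : Set ℝ) (x y : ℝ) :
    taylorWithinEval u 5 s x y =
      u x + (y - x) * iteratedDerivWithin 1 u s x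
        + (y - x) ^ 2 / 2 * iteratedDerivWithin 2 u s x
        + (y - x) ^ 3 / 6 * iteratedDerivWithin 3 u s x
        + (y - x) ^ 4 / 24 * iteratedDerivWithin 4 u s x
        + (y - x) ^ 5 / 120 * iteratedDerivWithin 5 u s x := by
  rw [taylor_within_apply]
  simp only [Finset.sum_range_succ, Finset.sum_range_zero, smul_eq_mul, iteratedDerivWithin_zero]
  norm_num [Nat.factorial]
  ring

set_option maxHeartbeats 1000000 in
/-- Taylor expansion of the non-uniform central second difference. For u
six times continuously differentiable on [a,b], there is C > 0 such that for all
x ∈ [a+δ, b−δ] and steps 0 < h₊, h₋ ≤ δ, the non-uniform second difference D satisfies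
|D − u''(x) − ((h₊−h₋)/3)·u'''(x) − ((h₊²−h₊h₋+h₋²)/12)·u''''(x)
  − ((h₊−h₋)(h₊²+h₋²)/60)·u⁽⁵⁾(x)| ≤ C·max(h₊,h₋)⁴. -/
theorem stmt_9 (a b δ : ℝ) (hab : a < b) (hδ : 0 < δ) (h2δ : 2 * δ < b - a)
    (u : ℝ → ℝ) (hu : ContDiffOn ℝ 6 u (Set.Icc a b)) :
    ∃ C > 0, ∀ x ∈ Set.Icc (a + δ) (b - δ), ∀ hp hm : ℝ,
      0 < hp → hp ≤ δ → 0 < hm → hm ≤ δ →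
      |((u (x + hp) - u x) / hp - (u x - u (x - hm)) / hm) / ((hp + hm) / 2)
          - iteratedDerivWithin 2 u (Set.Icc a b) x
          - (hp - hm) / 3 * iteratedDerivWithin 3 u (Set.Icc a b) x
          - (hp ^ 2 - hp * hm + hm ^ 2) / 12 * iteratedDerivWithin 4 u (Set.Icc a b) x
          - (hp - hm) * (hp ^ 2 + hm ^ 2) / 60 * iteratedDerivWithin 5 u (Set.Icc a b) x|
        ≤ C * (max hp hm) ^ 4 := by
  have hu' : ContDiffOn ℝ ((5 : ℕ) + 1) u (Set.Icc a b) := by exact_mod_cast hu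
  have hcont : ContinuousOn (iteratedDerivWithin 6 u (Set.Icc a b)) (Set.Icc a b) :=
    hu.continuousOn_iteratedDerivWithin le_rfl (uniqueDiffOn_Icc hab)
  obtain ⟨M, hM⟩ := isCompact_Icc.exists_bound_of_continuousOn hcont
  set M' : ℝ := max M 0 with hM'def
  have hM'0 : 0 ≤ M' := le_max_right _ _
  have hM' : ∀ y ∈ Set.Icc a b, |iteratedDerivWithin ((5 : ℕ) + 1) u (Set.Icc a b) y| ≤ M' := by
    intro y hy
    have h := hM y hy
    rw [Real.norm_eq_abs] at h
    exact le_trans (by exact_mod_cast h) (le_max_left _ _)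
  refine ⟨M' / 60 + 1, by positivity, ?_⟩
  intro x hx hp hm hp0 hpδ hm0 hmδ
  have hxab : x ∈ Set.Icc a b := ⟨by linarith [hx.1], by linarith [hx.2]⟩
  have hxp : x + hp ∈ Set.Icc a b := ⟨by linarith [hx.1], by linarith [hx.2]⟩
  have hxm : x - hm ∈ Set.Icc a b := ⟨by linarith [hx.1], by linarith [hx.2]⟩
  have hRp : |u (x + hp) - (u x + hp * iteratedDerivWithin 1 u (Set.Icc a b) x + hp ^ 2 / 2 * iteratedDerivWithin 2 u (Set.Icc a b) x + hp ^ 3 / 6 * iteratedDerivWithin 3 u (Set.Icc a b) x + hp ^ 4 / 24 * iteratedDerivWithin 4 u (Set.Icc a b) x + hp ^ 5 / 120 * iteratedDerivWithin 5 u (Set.Icc a b) x)| ≤ M' * hp ^ 6 / 120 := by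
    have h0 := taylor_bound_two_sided (n := 5) hab hu' hxp hxab hM'
    rw [taylor_expand6] at h0
    have e2 : M' * |x + hp - x| ^ (5 + 1) / (Nat.factorial 5 : ℝ) = M' * hp ^ 6 / 120 := by
      rw [show x + hp - x = hp from by ring, abs_of_pos hp0]
      norm_num [Nat.factorial]
    rw [e2] at h0
    refine le_trans (le_of_eq ?_) h0
    congr 1
    ring
  have hRm : |u (x - hm) - (u x - hm * iteratedDerivWithin 1 u (Set.Icc a b) x + hm ^ 2 / 2 * iteratedDerivWithin 2 u (Set.Icc a b) x - hm ^ 3 / 6 * iteratedDerivWithin 3 u (Set.Icc a b) x + hm ^ 4 / 24 * iteratedDerivWithin 4 u (Set.Icc a b) x - hm ^ 5 / 120 * iteratedDerivWithin 5 u (Set.Icc a b) x)| ≤ M' * hm ^ 6 / 120 := by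
    have h0 := taylor_bound_two_sided (n := 5) hab hu' hxm hxab hM'
    rw [taylor_expand6] at h0
    have e2 : M' * |x - hm - x| ^ (5 + 1) / (Nat.factorial 5 : ℝ) = M' * hm ^ 6 / 120 := by
      rw [show x - hm - x = -hm from by ring, abs_neg, abs_of_pos hm0]
      norm_num [Nat.factorial]
    rw [e2] at h0
    refine le_trans (le_of_eq ?_) h0
    congr 1
    ring
  have hsum : (0:ℝ) < hp + hm := by linarith
  have hkey : ((u (x + hp) - u x) / hp - (u x - u (x - hm)) / hm) / ((hp + hm) / 2)
          - iteratedDerivWithin 2 u (Set.Icc a b) x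
          - (hp - hm) / 3 * iteratedDerivWithin 3 u (Set.Icc a b) x
          - (hp ^ 2 - hp * hm + hm ^ 2) / 12 * iteratedDerivWithin 4 u (Set.Icc a b) x
          - (hp - hm) * (hp ^ 2 + hm ^ 2) / 60 * iteratedDerivWithin 5 u (Set.Icc a b) x
        = ((u (x + hp) - (u x + hp * iteratedDerivWithin 1 u (Set.Icc a b) x + hp ^ 2 / 2 * iteratedDerivWithin 2 u (Set.Icc a b) x + hp ^ 3 / 6 * iteratedDerivWithin 3 u (Set.Icc a b) x + hp ^ 4 / 24 * iteratedDerivWithin 4 u (Set.Icc a b) x + hp ^ 5 / 120 * iteratedDerivWithin 5 u (Set.Icc a b) x)) / hp + (u (x - hm) - (u x - hm * iteratedDerivWithin 1 u (Set.Icc a b) x + hm ^ 2 / 2 * iteratedDerivWithin 2 u (Set.Icc a b) x - hm ^ 3 / 6 * iteratedDerivWithin 3 u (Set.Icc a b) x + hm ^ 4 / 24 * iteratedDerivWithin 4 u (Set.Icc a b) x - hm ^ 5 / 120 * iteratedDerivWithin 5 u (Set.Icc a b) x)) / hm) * (2 / (hp + hm)) := by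
    field_simp
    ring
  rw [hkey]
  set K := max hp hm with hKdef
  have hK0 : 0 < K := lt_max_of_lt_left hp0
  have hpK : hp ≤ K := le_max_left _ _
  have hmK : hm ≤ K := le_max_right _ _
  have hp4 : hp ^ 4 ≤ K ^ 4 := pow_le_pow_left₀ hp0.le hpK 4
  have hm4 : hm ^ 4 ≤ K ^ 4 := pow_le_pow_left₀ hm0.le hmK 4
  have e1 : |u (x + hp) - (u x + hp * iteratedDerivWithin 1 u (Set.Icc a b) x + hp ^ 2 / 2 * iteratedDerivWithin 2 u (Set.Icc a b) x + hp ^ 3 / 6 * iteratedDerivWithin 3 u (Set.Icc a b) x + hp ^ 4 / 24 * iteratedDerivWithin 4 u (Set.Icc a b) x + hp ^ 5 / 120 * iteratedDerivWithin 5 u (Set.Icc a b) x)| / hp ≤ M' * K ^ 4 * hp / 120 := by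
    rw [div_le_div_iff₀ hp0 (by norm_num : (0:ℝ) < 120)]
    calc |u (x + hp) - (u x + hp * iteratedDerivWithin 1 u (Set.Icc a b) x + hp ^ 2 / 2 * iteratedDerivWithin 2 u (Set.Icc a b) x + hp ^ 3 / 6 * iteratedDerivWithin 3 u (Set.Icc a b) x + hp ^ 4 / 24 * iteratedDerivWithin 4 u (Set.Icc a b) x + hp ^ 5 / 120 * iteratedDerivWithin 5 u (Set.Icc a b) x)| * 120 ≤ M' * hp ^ 6 / 120 * 120 := by linarith
      _ = M' * (hp ^ 4 * hp ^ 2) := by ring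
      _ ≤ M' * (K ^ 4 * hp ^ 2) :=
          mul_le_mul_of_nonneg_left (mul_le_mul_of_nonneg_right hp4 (by positivity)) hM'0
      _ = M' * K ^ 4 * hp * hp := by ring
  have e2 : |u (x - hm) - (u x - hm * iteratedDerivWithin 1 u (Set.Icc a b) x + hm ^ 2 / 2 * iteratedDerivWithin 2 u (Set.Icc a b) x - hm ^ 3 / 6 * iteratedDerivWithin 3 u (Set.Icc a b) x + hm ^ 4 / 24 * iteratedDerivWithin 4 u (Set.Icc a b) x - hm ^ 5 / 120 * iteratedDerivWithin 5 u (Set.Icc a b) x)| / hm ≤ M' * K ^ 4 * hm / 120 := by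
    rw [div_le_div_iff₀ hm0 (by norm_num : (0:ℝ) < 120)]
    calc |u (x - hm) - (u x - hm * iteratedDerivWithin 1 u (Set.Icc a b) x + hm ^ 2 / 2 * iteratedDerivWithin 2 u (Set.Icc a b) x - hm ^ 3 / 6 * iteratedDerivWithin 3 u (Set.Icc a b) x + hm ^ 4 / 24 * iteratedDerivWithin 4 u (Set.Icc a b) x - hm ^ 5 / 120 * iteratedDerivWithin 5 u (Set.Icc a b) x)| * 120 ≤ M' * hm ^ 6 / 120 * 120 := by linarith
      _ = M' * (hm ^ 4 * hm ^ 2) := by ring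
      _ ≤ M' * (K ^ 4 * hm ^ 2) :=
          mul_le_mul_of_nonneg_left (mul_le_mul_of_nonneg_right hm4 (by positivity)) hM'0
      _ = M' * K ^ 4 * hm * hm := by ring
  calc |((u (x + hp) - (u x + hp * iteratedDerivWithin 1 u (Set.Icc a b) x + hp ^ 2 / 2 * iteratedDerivWithin 2 u (Set.Icc a b) x + hp ^ 3 / 6 * iteratedDerivWithin 3 u (Set.Icc a b) x + hp ^ 4 / 24 * iteratedDerivWithin 4 u (Set.Icc a b) x + hp ^ 5 / 120 * iteratedDerivWithin 5 u (Set.Icc a b) x)) / hp + (u (x - hm) - (u x - hm * iteratedDerivWithin 1 u (Set.Icc a b) x + hm ^ 2 / 2 * iteratedDerivWithin 2 u (Set.Icc a b) x - hm ^ 3 / 6 * iteratedDerivWithin 3 u (Set.Icc a b) x + hm ^ 4 / 24 * iteratedDerivWithin 4 u (Set.Icc a b) x - hm ^ 5 / 120 * iteratedDerivWithin 5 u (Set.Icc a b) x)) / hm) * (2 / (hp + hm))|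
      = |(u (x + hp) - (u x + hp * iteratedDerivWithin 1 u (Set.Icc a b) x + hp ^ 2 / 2 * iteratedDerivWithin 2 u (Set.Icc a b) x + hp ^ 3 / 6 * iteratedDerivWithin 3 u (Set.Icc a b) x + hp ^ 4 / 24 * iteratedDerivWithin 4 u (Set.Icc a b) x + hp ^ 5 / 120 * iteratedDerivWithin 5 u (Set.Icc a b) x)) / hp + (u (x - hm) - (u x - hm * iteratedDerivWithin 1 u (Set.Icc a b) x + hm ^ 2 / 2 * iteratedDerivWithin 2 u (Set.Icc a b) x - hm ^ 3 / 6 * iteratedDerivWithin 3 u (Set.Icc a b) x + hm ^ 4 / 24 * iteratedDerivWithin 4 u (Set.Icc a b) x - hm ^ 5 / 120 * iteratedDerivWithin 5 u (Set.Icc a b) x)) / hm| * (2 / (hp + hm)) := by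
        rw [abs_mul, abs_of_pos (by positivity : (0:ℝ) < 2 / (hp + hm))]
    _ ≤ (|u (x + hp) - (u x + hp * iteratedDerivWithin 1 u (Set.Icc a b) x + hp ^ 2 / 2 * iteratedDerivWithin 2 u (Set.Icc a b) x + hp ^ 3 / 6 * iteratedDerivWithin 3 u (Set.Icc a b) x + hp ^ 4 / 24 * iteratedDerivWithin 4 u (Set.Icc a b) x + hp ^ 5 / 120 * iteratedDerivWithin 5 u (Set.Icc a b) x)| / hp + |u (x - hm) - (u x - hm * iteratedDerivWithin 1 u (Set.Icc a b) x + hm ^ 2 / 2 * iteratedDerivWithin 2 u (Set.Icc a b) x - hm ^ 3 / 6 * iteratedDerivWithin 3 u (Set.Icc a b) x + hm ^ 4 / 24 * iteratedDerivWithin 4 u (Set.Icc a b) x - hm ^ 5 / 120 * iteratedDerivWithin 5 u (Set.Icc a b) x)| / hm) * (2 / (hp + hm)) := by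
        gcongr
        calc |(u (x + hp) - (u x + hp * iteratedDerivWithin 1 u (Set.Icc a b) x + hp ^ 2 / 2 * iteratedDerivWithin 2 u (Set.Icc a b) x + hp ^ 3 / 6 * iteratedDerivWithin 3 u (Set.Icc a b) x + hp ^ 4 / 24 * iteratedDerivWithin 4 u (Set.Icc a b) x + hp ^ 5 / 120 * iteratedDerivWithin 5 u (Set.Icc a b) x)) / hp + (u (x - hm) - (u x - hm * iteratedDerivWithin 1 u (Set.Icc a b) x + hm ^ 2 / 2 * iteratedDerivWithin 2 u (Set.Icc a b) x - hm ^ 3 / 6 * iteratedDerivWithin 3 u (Set.Icc a b) x + hm ^ 4 / 24 * iteratedDerivWithin 4 u (Set.Icc a b) x - hm ^ 5 / 120 * iteratedDerivWithin 5 u (Set.Icc a b) x)) / hm|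
            ≤ |(u (x + hp) - (u x + hp * iteratedDerivWithin 1 u (Set.Icc a b) x + hp ^ 2 / 2 * iteratedDerivWithin 2 u (Set.Icc a b) x + hp ^ 3 / 6 * iteratedDerivWithin 3 u (Set.Icc a b) x + hp ^ 4 / 24 * iteratedDerivWithin 4 u (Set.Icc a b) x + hp ^ 5 / 120 * iteratedDerivWithin 5 u (Set.Icc a b) x)) / hp| + |(u (x - hm) - (u x - hm * iteratedDerivWithin 1 u (Set.Icc a b) x + hm ^ 2 / 2 * iteratedDerivWithin 2 u (Set.Icc a b) x - hm ^ 3 / 6 * iteratedDerivWithin 3 u (Set.Icc a b) x + hm ^ 4 / 24 * iteratedDerivWithin 4 u (Set.Icc a b) x - hm ^ 5 / 120 * iteratedDerivWithin 5 u (Set.Icc a b) x)) / hm| := abs_add_le _ _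
          _ = |u (x + hp) - (u x + hp * iteratedDerivWithin 1 u (Set.Icc a b) x + hp ^ 2 / 2 * iteratedDerivWithin 2 u (Set.Icc a b) x + hp ^ 3 / 6 * iteratedDerivWithin 3 u (Set.Icc a b) x + hp ^ 4 / 24 * iteratedDerivWithin 4 u (Set.Icc a b) x + hp ^ 5 / 120 * iteratedDerivWithin 5 u (Set.Icc a b) x)| / hp + |u (x - hm) - (u x - hm * iteratedDerivWithin 1 u (Set.Icc a b) x + hm ^ 2 / 2 * iteratedDerivWithin 2 u (Set.Icc a b) x - hm ^ 3 / 6 * iteratedDerivWithin 3 u (Set.Icc a b) x + hm ^ 4 / 24 * iteratedDerivWithin 4 u (Set.Icc a b) x - hm ^ 5 / 120 * iteratedDerivWithin 5 u (Set.Icc a b) x)| / hm := by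
              rw [abs_div, abs_div, abs_of_pos hp0, abs_of_pos hm0]
    _ ≤ (M' * K ^ 4 * hp / 120 + M' * K ^ 4 * hm / 120) * (2 / (hp + hm)) := by gcongr
    _ = M' * K ^ 4 / 60 := by field_simp; ring
    _ ≤ (M' / 60 + 1) * K ^ 4 := by nlinarith [pow_nonneg hK0.le 4]
end

section
/- Let λ > 0, let u : ℝ → ℝ be a solution of u''(y) = λ²·u(y) for all y (hence u is infinitely differentiable), and let x : [0, 1] → ℝ be four times continuously differentiable with x'(q) > 0 for all q ∈ [0, 1]. Define, for h ∈ (0, 1/2] and q ∈ [h, 1 − h], the consistency error ψ_h(q) := −[ (u(x(q+h)) − u(x(q)))/h₊ − (u(x(q)) − u(x(q−h)))/h₋ ] / ((h₊ + h₋)/2) + λ²·u(x(q)), where h₊ = x(q+h) − x(q) and h₋ = x(q) − x(q−h). Then there exists a constant C > 0 such that for all h ∈ (0, 1/2] and all q ∈ [h, 1 − h], |ψ_h(q) + (h²/3)·( x''(q)·u'''(x(q)) + (1/4)·(x'(q))²·u''''(x(q)) )| ≤ C·h⁴. In particular the central difference scheme on the non-uniform grid generated by x is in general second-order consistent: |ψ_h(q)|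 ≤ C'·h² uniformly for some C' > 0. -/
/-!
Expanding `u` to sixth order about `X = x(q)` turns the non-uniform second difference with steps
`h₊, h₋` into `u'' + u'''·(h₊ - h₋)/3 + u''''·(h₊² - h₊h₋ + h₋²)/12 + u⁽⁵⁾·(h₊ - h₋)(h₊² + h₋²)/60`
up to `O(h₊⁴ + h₋⁴)`. Expanding `x` to fourth order about `q` gives `h₊ - h₋ = h²x'' + O(h⁴)`,
`h₊ + h₋ = 2hx' + O(h³)`, hence `h₊² - h₊h₋ + h₋² = h²x'² + O(h⁴)` and `h₊, h₋ = O(h)`; in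
particular the `u⁽⁵⁾` term is `O(h⁴)`. Since `u'' = λ²u`, what is left of the consistency error is
`-(h²/3)(x''u''' + x'²u''''/4) + O(h⁴)`. All constants are uniform in `q` because the derivatives
involved are continuous on compact sets: `[0, 1]` for `x`, and `[x(0), x(1)]` for `u`, which is
smooth since the equation bootstraps its regularity.
-/

open Set Filter Topology
open scoped Nat ContDiff

theorem contDiff_infty_of_deriv_deriv_eq_const_mul {u : ℝ → ℝ} {c : ℝ} (hu : ContDiff ℝ 2 u)
    (hode : ∀ y, deriv (deriv u) y = c * u y) : ContDiff ℝ ∞ u := by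
  have hdu : ContDiff ℝ 1 (deriv u) := (contDiff_succ_iff_deriv (n := 1).mp hu).2.2
  have h : ∀ n : ℕ, ContDiff ℝ n u ∧ ContDiff ℝ n (deriv u) := by
    intro n
    induction n with
    | zero => exact ⟨hu.of_le (by simp), hdu.of_le (by simp)⟩
    | succ n ih =>
      have hddu : ContDiff ℝ n (deriv (deriv u)) := by
        rw [funext hode]; exact contDiff_const.mul ih.1
      exact ⟨contDiff_succ_iff_deriv.mpr ⟨hu.differentiable (by simp), by simp, ih.2⟩,
        contDiff_succ_iff_deriv.mpr ⟨hdu.differentiable one_ne_zero, by simp, hddu⟩⟩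
  exact contDiff_infty.mpr fun n => (h n).1

theorem strictMonoOn_Icc_of_derivWithin_pos {f : ℝ → ℝ} {a b : ℝ}
    (hf' : ∀ y ∈ Icc a b, 0 < derivWithin f (Icc a b) y) : StrictMonoOn f (Icc a b) := by
  have hdiff : DifferentiableOn ℝ f (Icc a b) := fun y hy =>
    differentiableWithinAt_of_derivWithin_ne_zero (hf' y hy).ne'
  refine strictMonoOn_of_deriv_pos (convex_Icc a b) hdiff.continuousOn fun y hy => ?_
  rw [interior_Icc] at hy
  rw [← derivWithin_of_mem_nhds (Icc_mem_nhds hy.1 hy.2)]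
  exact hf' y (Ioo_subset_Icc_self hy)

theorem iteratedDerivWithin_of_mem_nhds {𝕜 F : Type*} [NontriviallyNormedField 𝕜]
    [NormedAddCommGroup F] [NormedSpace 𝕜 F] {f : 𝕜 → F} {s : Set 𝕜} {y : 𝕜} {k : ℕ}
    (hs : s ∈ 𝓝 y) : iteratedDerivWithin k f s y = iteratedDeriv k f y := by
  rw [← iteratedDerivWithin_univ, iteratedDerivWithin, iteratedDerivWithin,
    iteratedFDerivWithin_congr_set (eventuallyEq_univ.2 hs)]

theorem abs_sub_taylor_le {f : ℝ → ℝ} {n : ℕ} {x₀ x C : ℝ}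
    (hf : ContDiffOn ℝ (n + 1) f (uIcc x₀ x)) (hx₀ : ContDiffAt ℝ n f x₀)
    (hC : ∀ y ∈ uIoo x₀ x, |iteratedDeriv (n + 1) f y| ≤ C) :
    |f x - ∑ k ∈ Finset.range (n + 1), iteratedDeriv k f x₀ * (x - x₀) ^ k / k !|
      ≤ C * |x - x₀| ^ (n + 1) / (n + 1)! := by
  rcases eq_or_ne x₀ x with rfl | hne
  · simp [Finset.sum_range_succ']
  obtain ⟨y, hy, hrem⟩ := taylor_mean_remainder_lagrange_iteratedDeriv hne hf
  have htaylor : taylorWithinEval f n (uIcc x₀ x) x₀ x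
      = ∑ k ∈ Finset.range (n + 1), iteratedDeriv k f x₀ * (x - x₀) ^ k / k ! := by
    rw [taylor_within_apply]
    refine Finset.sum_congr rfl fun k hk => ?_
    rw [iteratedDerivWithin_eq_iteratedDeriv (uniqueDiffOn_uIcc hne)
      (hx₀.of_le (by exact_mod_cast Nat.lt_succ_iff.mp (Finset.mem_range.mp hk))) left_mem_uIcc,
      smul_eq_mul]
    ring
  rw [← htaylor, hrem, abs_div, abs_mul, abs_pow, Nat.abs_cast]
  gcongr
  exact hC y hy

theorem abs_sub_taylorWithin_Icc_le {f : ℝ → ℝ} {n : ℕ} {a b x₀ x C : ℝ}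
    (hf : ContDiffOn ℝ (n + 1) f (Icc a b)) (hx₀ : x₀ ∈ Ioo a b) (hx : x ∈ Icc a b)
    (hC : ∀ y ∈ Icc a b, |iteratedDerivWithin (n + 1) f (Icc a b) y| ≤ C) :
    |f x - ∑ k ∈ Finset.range (n + 1), iteratedDerivWithin k f (Icc a b) x₀ * (x - x₀) ^ k / k !|
      ≤ C * |x - x₀| ^ (n + 1) / (n + 1)! := by
  have hx₀' : Icc a b ∈ 𝓝 x₀ := Icc_mem_nhds hx₀.1 hx₀.2
  simp_rw [iteratedDerivWithin_of_mem_nhds hx₀']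
  refine abs_sub_taylor_le (hf.mono (uIcc_subset_Icc (Ioo_subset_Icc_self hx₀) hx))
    ((hf.contDiffAt hx₀').of_le (by exact_mod_cast Nat.le_succ n)) fun y hy => ?_
  have hy' := uIoo_subset_Ioo (Ioo_subset_Icc_self hx₀) hx hy
  rw [← iteratedDerivWithin_of_mem_nhds (Icc_mem_nhds hy'.1 hy'.2)]
  exact hC y (Ioo_subset_Icc_self hy')

theorem IsCompact.exists_uniform_bound_of_continuousOn {s : Set ℝ} (hs : IsCompact s) {n : ℕ}
    {g : ℕ → ℝ → ℝ} (hg : ∀ k ≤ n, ContinuousOn (g k) s) :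
    ∃ M, ∀ k ≤ n, ∀ y ∈ s, |g k y| ≤ M := by
  obtain ⟨M, hM⟩ :=
    hs.exists_bound_of_continuousOn (f := fun y => ∑ k ∈ Finset.range (n + 1), |g k y|)
    (continuousOn_finsetSum _ fun k hk => (hg k (Nat.lt_succ_iff.mp (Finset.mem_range.mp hk))).abs)
  refine ⟨M, fun k hk y hy => ?_⟩
  calc |g k y| ≤ ∑ j ∈ Finset.range (n + 1), |g j y| :=
        Finset.single_le_sum (f := fun j => |g j y|) (fun _ _ => abs_nonneg _)
          (Finset.mem_range.mpr (Nat.lt_succ_of_le hk))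
    _ ≤ M := (le_abs_self _).trans (by simpa using hM y hy)

theorem ContDiffOn.exists_bound_iteratedDerivWithin {f : ℝ → ℝ} {n : ℕ} {s : Set ℝ}
    (hf : ContDiffOn ℝ n f s) (hs : UniqueDiffOn ℝ s) (hsc : IsCompact s) :
    ∃ M, ∀ k ≤ n, ∀ y ∈ s, |iteratedDerivWithin k f s y| ≤ M :=
  hsc.exists_uniform_bound_of_continuousOn fun k hk =>
    hf.continuousOn_iteratedDerivWithin (by exact_mod_cast hk) hs

theorem ContDiff.exists_bound_iteratedDeriv {f : ℝ → ℝ} {n : ℕ} (hf : ContDiff ℝ n f)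
    {s : Set ℝ} (hs : IsCompact s) : ∃ M, ∀ k ≤ n, ∀ y ∈ s, |iteratedDeriv k f y| ≤ M :=
  hs.exists_uniform_bound_of_continuousOn fun k hk =>
    (hf.continuous_iteratedDeriv k (by exact_mod_cast hk)).continuousOn

noncomputable def centralSecondDiff (f : ℝ → ℝ) (X a b : ℝ) : ℝ :=
  ((f (X + a) - f X) / a - (f X - f (X - b)) / b) / ((a + b) / 2)

theorem abs_two_mul_div_add_div_le {a b Ra Rb M : ℝ} (ha : 0 < a) (hb : 0 < b)
    (hRa : |Ra| ≤ M * a ^ 6 / 720) (hRb : |Rb| ≤ M * b ^ 6 / 720) :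
    |2 * (Ra / a + Rb / b) / (a + b)| ≤ M * (a ^ 4 + b ^ 4) / 360 := by
  have hM0 : 0 ≤ M := by nlinarith [(abs_nonneg _).trans hRa, pow_pos ha 6]
  have hRa' : |Ra / a| ≤ M * a ^ 5 / 720 := by
    rw [abs_div, abs_of_pos ha, div_le_iff₀ ha]
    linarith
  have hRb' : |Rb / b| ≤ M * b ^ 5 / 720 := by
    rw [abs_div, abs_of_pos hb, div_le_iff₀ hb]
    linarith
  have hab : 0 < a + b := add_pos ha hb
  rw [abs_div, abs_mul, abs_two, abs_of_pos hab, div_le_iff₀ hab]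
  calc 2 * |Ra / a + Rb / b| ≤ 2 * (M * a ^ 5 / 720 + M * b ^ 5 / 720) := by
        gcongr
        exact (abs_add_le _ _).trans (add_le_add hRa' hRb')
    _ ≤ M * (a ^ 4 + b ^ 4) / 360 * (a + b) := by
        have : 0 ≤ M * (a ^ 4 * b + a * b ^ 4) := by positivity
        linarith

theorem abs_centralSecondDiff_sub_le {f : ℝ → ℝ} (hf : ContDiff ℝ 6 f) {X a b M : ℝ}
    (ha : 0 < a) (hb : 0 < b) (hM : ∀ y ∈ Icc (X - b) (X + a), |iteratedDeriv 6 f y| ≤ M) :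
    |centralSecondDiff f X a b - (iteratedDeriv 2 f X + iteratedDeriv 3 f X * (a - b) / 3
        + iteratedDeriv 4 f X * (a ^ 2 - a * b + b ^ 2) / 12
        + iteratedDeriv 5 f X * (a - b) * (a ^ 2 + b ^ 2) / 60)| ≤ M * (a ^ 4 + b ^ 4) / 360 := by
  set P : ℝ → ℝ := fun d => ∑ k ∈ Finset.range 6, iteratedDeriv k f X * d ^ k / k ! with hP
  have taylor : ∀ d ∈ Icc (-b) a, |f (X + d) - P d| ≤ M * d ^ 6 / 720 := fun d hd => by
    have hsub : uIcc X (X + d) ⊆ Icc (X - b) (X + a) :=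
      uIcc_subset_Icc ⟨by linarith, by linarith⟩ ⟨by linarith [hd.1], by linarith [hd.2]⟩
    simpa [Even.pow_abs ⟨3, rfl⟩, Nat.factorial] using abs_sub_taylor_le (n := 5) hf.contDiffOn
      (hf.contDiffAt.of_le (by norm_num)) fun y hy => hM y (hsub (uIoo_subset_uIcc_self hy))
  have hexpand : ∀ d, P d = f X + iteratedDeriv 1 f X * d + iteratedDeriv 2 f X * d ^ 2 / 2
      + iteratedDeriv 3 f X * d ^ 3 / 6 + iteratedDeriv 4 f X * d ^ 4 / 24
      + iteratedDeriv 5 f X * d ^ 5 / 120 := fun d => by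
    simp [hP, Finset.sum_range_succ, Nat.factorial]
  have hRa := taylor a ⟨by linarith, le_rfl⟩
  have hRb := taylor (-b) ⟨le_rfl, by linarith⟩
  rw [← sub_eq_add_neg, neg_pow, Even.neg_one_pow ⟨3, rfl⟩, one_mul] at hRb
  convert abs_two_mul_div_add_div_le ha hb hRa hRb using 2
  rw [centralSecondDiff, hexpand, hexpand]
  field_simp
  ring

section GridSteps

-- `a` and `b` stand for the grid steps `h₊ = x(q+h) - x(q)` and `h₋ = x(q) - x(q-h)`,
-- and `x1, x2, x3` for the derivatives of the mapping `x` at `q`.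
variable {K h a b x1 x2 x3 : ℝ}

theorem abs_stepDiff_sub_le
    (hTa : |a - (h * x1 + h ^ 2 * x2 / 2 + h ^ 3 * x3 / 6)| ≤ K * h ^ 4 / 24)
    (hTb : |b - (h * x1 - h ^ 2 * x2 / 2 + h ^ 3 * x3 / 6)| ≤ K * h ^ 4 / 24) :
    |a - b - h ^ 2 * x2| ≤ K * h ^ 4 / 12 := by
  rw [abs_le] at *
  constructor <;> linarith

theorem abs_stepDiff_le (hh : 0 ≤ h) (hh1 : h ≤ 1) (hx2 : |x2| ≤ K)
    (hTa : |a - (h * x1 + h ^ 2 * x2 / 2 + h ^ 3 * x3 / 6)| ≤ K * h ^ 4 / 24)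
    (hTb : |b - (h * x1 - h ^ 2 * x2 / 2 + h ^ 3 * x3 / 6)| ≤ K * h ^ 4 / 24) :
    |a - b| ≤ 2 * K * h ^ 2 := by
  have hdiff := abs_stepDiff_sub_le hTa hTb
  have hK : 0 ≤ K := (abs_nonneg _).trans hx2
  have hx2h : |h ^ 2 * x2| ≤ K * h ^ 2 := by
    rw [abs_mul, abs_of_nonneg (sq_nonneg h), mul_comm]
    exact mul_le_mul_of_nonneg_right hx2 (sq_nonneg h)
  have h42 : K * h ^ 4 ≤ K * h ^ 2 :=
    mul_le_mul_of_nonneg_left (pow_le_pow_of_le_one hh hh1 (by norm_num)) hK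
  rw [abs_le] at *
  constructor <;> linarith

theorem abs_stepSum_sub_le (hh : 0 ≤ h) (hh1 : h ≤ 1) (hx3 : |x3| ≤ K)
    (hTa : |a - (h * x1 + h ^ 2 * x2 / 2 + h ^ 3 * x3 / 6)| ≤ K * h ^ 4 / 24)
    (hTb : |b - (h * x1 - h ^ 2 * x2 / 2 + h ^ 3 * x3 / 6)| ≤ K * h ^ 4 / 24) :
    |a + b - 2 * h * x1| ≤ K * h ^ 3 := by
  have hK : 0 ≤ K := (abs_nonneg _).trans hx3
  have hx3h : |h ^ 3 * x3| ≤ K * h ^ 3 := by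
    rw [abs_mul, abs_of_nonneg (pow_nonneg hh 3), mul_comm]
    exact mul_le_mul_of_nonneg_right hx3 (pow_nonneg hh 3)
  have h43 : K * h ^ 4 ≤ K * h ^ 3 :=
    mul_le_mul_of_nonneg_left (pow_le_pow_of_le_one hh hh1 (by norm_num)) hK
  rw [abs_le] at *
  constructor <;> linarith

theorem abs_stepQuadratic_sub_le (hh : 0 ≤ h) (ha : 0 ≤ a) (hb : 0 ≤ b) (haK : a ≤ K * h)
    (hbK : b ≤ K * h) (hx1 : |x1| ≤ K) (hdiff : |a - b| ≤ 2 * K * h ^ 2)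
    (hsum : |a + b - 2 * h * x1| ≤ K * h ^ 3) :
    |a ^ 2 - a * b + b ^ 2 - h ^ 2 * x1 ^ 2| ≤ 4 * K ^ 2 * h ^ 4 := by
  have hx1h : |h * x1| ≤ K * h := by
    rw [abs_mul, abs_of_nonneg hh, mul_comm]
    exact mul_le_mul_of_nonneg_right hx1 hh
  have hsum' : |a + b + 2 * h * x1| ≤ 4 * K * h := by
    rw [abs_le] at *
    constructor <;> linarith
  have hsq : |a - b| ^ 2 ≤ (2 * K * h ^ 2) ^ 2 := pow_le_pow_left₀ (abs_nonneg _) hdiff 2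
  have hprod : |a + b - 2 * h * x1| * |a + b + 2 * h * x1| ≤ K * h ^ 3 * (4 * K * h) :=
    mul_le_mul hsum hsum' (abs_nonneg _) ((abs_nonneg _).trans hsum)
  calc |a ^ 2 - a * b + b ^ 2 - h ^ 2 * x1 ^ 2|
      = |(3 * (a - b) ^ 2 + (a + b - 2 * h * x1) * (a + b + 2 * h * x1)) / 4| := by
        congr 1; ring
    _ = |3 * (a - b) ^ 2 + (a + b - 2 * h * x1) * (a + b + 2 * h * x1)| / 4 := by
        rw [abs_div, abs_of_pos (by norm_num : (0 : ℝ) < 4)]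
    _ ≤ (3 * |a - b| ^ 2 + |a + b - 2 * h * x1| * |a + b + 2 * h * x1|) / 4 := by
        gcongr
        rw [← abs_mul, ← sq_abs (a - b)]
        exact (abs_add_le _ _).trans (by rw [abs_mul, abs_of_pos three_pos, abs_sq])
    _ ≤ 4 * K ^ 2 * h ^ 4 := by nlinarith

theorem abs_consistencyRemainder_le {u3 u4 u5 R : ℝ} (hK : 1 ≤ K) (hh : 0 ≤ h) (hh1 : h ≤ 1)
    (ha : 0 ≤ a) (hb : 0 ≤ b) (haK : a ≤ K * h) (hbK : b ≤ K * h)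
    (hx1 : |x1| ≤ K) (hx2 : |x2| ≤ K) (hx3 : |x3| ≤ K)
    (hu3 : |u3| ≤ K) (hu4 : |u4| ≤ K) (hu5 : |u5| ≤ K)
    (hTa : |a - (h * x1 + h ^ 2 * x2 / 2 + h ^ 3 * x3 / 6)| ≤ K * h ^ 4 / 24)
    (hTb : |b - (h * x1 - h ^ 2 * x2 / 2 + h ^ 3 * x3 / 6)| ≤ K * h ^ 4 / 24)
    (hR : |R| ≤ K * (a ^ 4 + b ^ 4) / 360) :
    |R + u3 * (a - b - h ^ 2 * x2) / 3 + u4 * (a ^ 2 - a * b + b ^ 2 - h ^ 2 * x1 ^ 2) / 12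
        + u5 * (a - b) * (a ^ 2 + b ^ 2) / 60| ≤ 3 * K ^ 5 * h ^ 4 := by
  have hdiff := abs_stepDiff_le hh hh1 hx2 hTa hTb
  have hquad := abs_stepQuadratic_sub_le hh ha hb haK hbK hx1 hdiff
    (abs_stepSum_sub_le hh hh1 hx3 hTa hTb)
  have hpow : ∀ n, a ^ n + b ^ n ≤ 2 * K ^ n * h ^ n := fun n => by
    have := pow_le_pow_left₀ ha haK n
    have := pow_le_pow_left₀ hb hbK n
    rw [mul_pow] at *
    linarith
  have t1 : |u3 * (a - b - h ^ 2 * x2) / 3| ≤ K * (K * h ^ 4 / 12) / 3 := by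
    rw [abs_div, abs_mul, abs_of_pos (by norm_num : (0 : ℝ) < 3)]
    gcongr
    exact abs_stepDiff_sub_le hTa hTb
  have t2 : |u4 * (a ^ 2 - a * b + b ^ 2 - h ^ 2 * x1 ^ 2) / 12|
      ≤ K * (4 * K ^ 2 * h ^ 4) / 12 := by
    rw [abs_div, abs_mul, abs_of_pos (by norm_num : (0 : ℝ) < 12)]
    gcongr
  have t3 : |u5 * (a - b) * (a ^ 2 + b ^ 2) / 60|
      ≤ K * (2 * K * h ^ 2) * (2 * K ^ 2 * h ^ 2) / 60 := by
    rw [abs_div, abs_mul, abs_mul, abs_of_nonneg (by positivity : 0 ≤ a ^ 2 + b ^ 2),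
      abs_of_pos (by norm_num : (0 : ℝ) < 60)]
    gcongr
    exact hpow 2
  have t4 : |R| ≤ K * (2 * K ^ 4 * h ^ 4) / 360 := hR.trans (by gcongr; exact hpow 4)
  have hKpow : ∀ n ≤ 5, K ^ n * h ^ 4 ≤ K ^ 5 * h ^ 4 := fun n hn =>
    mul_le_mul_of_nonneg_right (pow_le_pow_right₀ hK hn) (by positivity)
  have := hKpow 2 (by norm_num)
  have := hKpow 3 (by norm_num)
  have := hKpow 4 (by norm_num)
  have : 0 ≤ K ^ 5 * h ^ 4 := by positivity
  calc _ ≤ |R| + |u3 * (a - b - h ^ 2 * x2) / 3|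
        + |u4 * (a ^ 2 - a * b + b ^ 2 - h ^ 2 * x1 ^ 2) / 12|
        + |u5 * (a - b) * (a ^ 2 + b ^ 2) / 60| := by
          simpa only [Real.norm_eq_abs] using norm_add₄_le (E := ℝ)
    _ ≤ 3 * K ^ 5 * h ^ 4 := by linarith

theorem abs_leadingTerm_le {u3 u4 : ℝ} (hK : 1 ≤ K) (hx1 : |x1| ≤ K) (hx2 : |x2| ≤ K)
    (hu3 : |u3| ≤ K) (hu4 : |u4| ≤ K) :
    |h ^ 2 / 3 * (x2 * u3 + 1 / 4 * x1 ^ 2 * u4)| ≤ K ^ 3 * h ^ 2 := by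
  have hK0 : 0 ≤ K := zero_le_one.trans hK
  have hK23 : K ^ 2 ≤ K ^ 3 := pow_le_pow_right₀ hK (by norm_num)
  have hbound : |x2 * u3 + 1 / 4 * x1 ^ 2 * u4| ≤ 3 * K ^ 3 := by
    have h1 : |x2 * u3| ≤ K ^ 2 := by
      rw [abs_mul, sq]; exact mul_le_mul hx2 hu3 (abs_nonneg _) hK0
    have h2 : |x1 ^ 2 * u4| ≤ K ^ 3 := by
      rw [abs_mul, abs_pow, pow_succ]
      exact mul_le_mul (pow_le_pow_left₀ (abs_nonneg _) hx1 2) hu4 (abs_nonneg _) (pow_nonneg hK0 2)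
    have h2' : |1 / 4 * x1 ^ 2 * u4| ≤ 1 / 4 * K ^ 3 := by
      rw [mul_assoc, abs_mul, abs_of_pos (by norm_num : (0 : ℝ) < 1 / 4)]
      linarith
    linarith [abs_add_le (x2 * u3) (1 / 4 * x1 ^ 2 * u4), pow_nonneg hK0 3]
  rw [abs_mul, abs_of_nonneg (by positivity : (0 : ℝ) ≤ h ^ 2 / 3)]
  calc _ ≤ h ^ 2 / 3 * (3 * K ^ 3) := by gcongr
    _ = K ^ 3 * h ^ 2 := by ring

theorem abs_le_of_abs_add_leadingTerm_le {e u3 u4 : ℝ} (hK : 1 ≤ K) (hh : 0 ≤ h)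
    (hh1 : h ≤ 1) (hx1 : |x1| ≤ K) (hx2 : |x2| ≤ K) (hu3 : |u3| ≤ K) (hu4 : |u4| ≤ K)
    (he : |e + h ^ 2 / 3 * (x2 * u3 + 1 / 4 * x1 ^ 2 * u4)| ≤ 3 * K ^ 5 * h ^ 4) :
    |e| ≤ 4 * K ^ 5 * h ^ 2 := by
  have hlead := abs_leadingTerm_le (h := h) hK hx1 hx2 hu3 hu4
  have h42 : K ^ 5 * h ^ 4 ≤ K ^ 5 * h ^ 2 := mul_le_mul_of_nonneg_left
    (pow_le_pow_of_le_one hh hh1 (by norm_num)) (by positivity)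
  have hK35 : K ^ 3 * h ^ 2 ≤ K ^ 5 * h ^ 2 :=
    mul_le_mul_of_nonneg_right (pow_le_pow_right₀ hK (by norm_num)) (by positivity)
  rw [abs_le] at he hlead ⊢
  constructor <;> linarith

end GridSteps

theorem abs_consistencyError_add_leadingTerm_le {u x : ℝ → ℝ} {K h q : ℝ} (hu : ContDiff ℝ 6 u)
    (hx : ContDiffOn ℝ 4 x (Icc 0 1)) (hmono : StrictMonoOn x (Icc 0 1)) (hK : 1 ≤ K)
    (huK : ∀ k ≤ 6, ∀ y ∈ Icc (x 0) (x 1), |iteratedDeriv k u y| ≤ K)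
    (hxK : ∀ k ≤ 4, ∀ y ∈ Icc 0 1, |iteratedDerivWithin k x (Icc 0 1) y| ≤ K)
    (hh : 0 < h) (hq : q ∈ Icc h (1 - h)) :
    |-centralSecondDiff u (x q) (x (q + h) - x q) (x q - x (q - h)) + iteratedDeriv 2 u (x q)
        + h ^ 2 / 3 * (iteratedDerivWithin 2 x (Icc 0 1) q * iteratedDeriv 3 u (x q)
          + 1 / 4 * derivWithin x (Icc 0 1) q ^ 2 * iteratedDeriv 4 u (x q))|
      ≤ 3 * K ^ 5 * h ^ 4 := by
  set xk := fun k => iteratedDerivWithin k x (Icc 0 1) q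
  have hq01 : q ∈ Ioo 0 1 := ⟨by linarith [hq.1], by linarith [hq.2]⟩
  have hqI : q ∈ Icc 0 1 := Ioo_subset_Icc_self hq01
  have hqp : q + h ∈ Icc 0 1 := ⟨by linarith [hq.1], by linarith [hq.2]⟩
  have hqm : q - h ∈ Icc 0 1 := ⟨by linarith [hq.1], by linarith [hq.2]⟩
  have taylor0 : ∀ y ∈ Icc 0 1, |x y - x q| ≤ K * |y - q| := fun y hy => by
    simpa using abs_sub_taylorWithin_Icc_le (n := 0) (hx.of_le (by norm_num)) hq01 hy
      (hxK 1 (by norm_num))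
  have taylor3 : ∀ y ∈ Icc 0 1, |x y - (x q + xk 1 * (y - q) + xk 2 * (y - q) ^ 2 / 2
      + xk 3 * (y - q) ^ 3 / 6)| ≤ K * (y - q) ^ 4 / 24 := fun y hy => by
    simpa [xk, Finset.sum_range_succ, Nat.factorial, Even.pow_abs ⟨2, rfl⟩] using
      abs_sub_taylorWithin_Icc_le (n := 3) hx hq01 hy (hxK 4 le_rfl)
  have ha : 0 < x (q + h) - x q := sub_pos.2 (hmono hqI hqp (by linarith))
  have hb : 0 < x q - x (q - h) := sub_pos.2 (hmono hqm hqI (by linarith))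
  have haK : x (q + h) - x q ≤ K * h := by
    simpa [abs_of_pos ha, abs_of_pos hh] using taylor0 _ hqp
  have hbK : x q - x (q - h) ≤ K * h := by
    simpa [abs_sub_comm, abs_of_pos hb, abs_of_pos hh] using taylor0 _ hqm
  have hTa : |x (q + h) - x q - (h * xk 1 + h ^ 2 * xk 2 / 2 + h ^ 3 * xk 3 / 6)|
      ≤ K * h ^ 4 / 24 := by
    convert taylor3 _ hqp using 2 <;> ring
  have hTb : |x q - x (q - h) - (h * xk 1 - h ^ 2 * xk 2 / 2 + h ^ 3 * xk 3 / 6)|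
      ≤ K * h ^ 4 / 24 := by
    rw [← abs_neg]
    convert taylor3 _ hqm using 2 <;> ring
  have hxq := hmono.monotoneOn.mapsTo_Icc hqI
  have hD := abs_centralSecondDiff_sub_le (X := x q) hu ha hb (M := K) fun y hy => by
    rw [sub_sub_cancel, add_sub_cancel] at hy
    exact huK 6 le_rfl y (Icc_subset_Icc (hmono.monotoneOn.mapsTo_Icc hqm).1
      (hmono.monotoneOn.mapsTo_Icc hqp).2 hy)
  have := abs_consistencyRemainder_le hK hh.le (by linarith [hq.1, hq.2]) ha.le hb.le haK hbK
    (hxK 1 (by norm_num) q hqI) (hxK 2 (by norm_num) q hqI) (hxK 3 (by norm_num) q hqI)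
    (huK 3 (by norm_num) _ hxq) (huK 4 (by norm_num) _ hxq) (huK 5 (by norm_num) _ hxq) hTa hTb hD
  rw [iteratedDerivWithin_one] at this
  rw [← abs_neg]
  convert this using 2
  ring

theorem stmt_13_general (lam : ℝ)
    (u : ℝ → ℝ) (hu : ContDiff ℝ 2 u)
    (hode : ∀ y : ℝ, deriv (deriv u) y = lam ^ 2 * u y)
    (x : ℝ → ℝ) (hx : ContDiffOn ℝ 4 x (Set.Icc 0 1))
    (hx' : ∀ q ∈ Set.Icc (0 : ℝ) 1, 0 < derivWithin x (Set.Icc 0 1) q)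
    (ψ : ℝ → ℝ → ℝ)
    (hψ : ψ = fun h q =>
      -(((u (x (q + h)) - u (x q)) / (x (q + h) - x q)
            - (u (x q) - u (x (q - h))) / (x q - x (q - h)))
          / (((x (q + h) - x q) + (x q - x (q - h))) / 2))
        + lam ^ 2 * u (x q)) :
    (∃ C > 0, ∀ h ∈ Set.Ioc (0 : ℝ) (1 / 2), ∀ q ∈ Set.Icc h (1 - h),
      |ψ h q
          + h ^ 2 / 3 * (iteratedDerivWithin 2 x (Set.Icc 0 1) q * iteratedDeriv 3 u (x q)
              + 1 / 4 * (derivWithin x (Set.Icc 0 1) q) ^ 2 * iteratedDeriv 4 u (x q))|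
        ≤ C * h ^ 4) ∧
    ∃ C' > 0, ∀ h ∈ Set.Ioc (0 : ℝ) (1 / 2), ∀ q ∈ Set.Icc h (1 - h),
      |ψ h q| ≤ C' * h ^ 2 := by
  have hu6 : ContDiff ℝ 6 u :=
    contDiff_infty.1 (contDiff_infty_of_deriv_deriv_eq_const_mul hu hode) 6
  have hmono := strictMonoOn_Icc_of_derivWithin_pos hx'
  obtain ⟨Mu, hMu⟩ := hu6.exists_bound_iteratedDeriv (isCompact_Icc (a := x 0) (b := x 1))
  obtain ⟨Mx, hMx⟩ :=
    hx.exists_bound_iteratedDerivWithin (n := 4) (uniqueDiffOn_Icc one_pos) isCompact_Icc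
  set K := max 1 (max Mu Mx)
  have hK : 1 ≤ K := le_max_left _ _
  have huK : ∀ k ≤ 6, ∀ y ∈ Icc (x 0) (x 1), |iteratedDeriv k u y| ≤ K := fun k hk y hy =>
    (hMu k hk y hy).trans ((le_max_left _ _).trans (le_max_right _ _))
  have hxK : ∀ k ≤ 4, ∀ y ∈ Icc 0 1, |iteratedDerivWithin k x (Icc 0 1) y| ≤ K :=
    fun k hk y hy => (hMx k hk y hy).trans ((le_max_right _ _).trans (le_max_right _ _))
  have hψ' : ∀ h q, ψ h q = -centralSecondDiff u (x q) (x (q + h) - x q) (x q - x (q - h))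
      + iteratedDeriv 2 u (x q) := fun h q => by
    rw [hψ, iteratedDeriv_succ, iteratedDeriv_one, hode]
    simp [centralSecondDiff]
  refine ⟨⟨3 * K ^ 5, by positivity, fun h hh q hq => ?_⟩,
    ⟨4 * K ^ 5, by positivity, fun h hh q hq => ?_⟩⟩ <;> rw [hψ']
  · exact abs_consistencyError_add_leadingTerm_le hu6 hx hmono hK huK hxK hh.1 hq
  have hq01 : q ∈ Icc (0 : ℝ) 1 := ⟨by linarith [hh.1, hq.1], by linarith [hh.1, hq.2]⟩
  have hxq := hmono.monotoneOn.mapsTo_Icc hq01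
  exact abs_le_of_abs_add_leadingTerm_le hK hh.1.le (by linarith [hh.2])
    (by simpa using hxK 1 (by norm_num) q hq01) (hxK 2 (by norm_num) q hq01)
    (huK 3 (by norm_num) _ hxq) (huK 4 (by norm_num) _ hxq)
    (abs_consistencyError_add_leadingTerm_le hu6 hx hmono hK huK hxK hh.1 hq)

/-- consistency error of the central difference scheme on the non-uniform
grid generated by a mapping x. If u solves u'' = λ²u on ℝ and x : [0,1] → ℝ is C⁴ with
x' > 0, then the consistency error ψ_h(q) satisfies
|ψ_h(q) + (h²/3)·(x''(q)·u'''(x(q)) + (1/4)·(x'(q))²·u''''(x(q)))| ≤ C·h⁴ uniformly for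
h ∈ (0,1/2], q ∈ [h, 1−h]; in particular |ψ_h(q)| ≤ C'·h² (second-order consistency). -/
theorem stmt_13 (lam : ℝ) (hlam : 0 < lam)
    (u : ℝ → ℝ) (hu : ContDiff ℝ 2 u)
    (hode : ∀ y : ℝ, deriv (deriv u) y = lam ^ 2 * u y)
    (x : ℝ → ℝ) (hx : ContDiffOn ℝ 4 x (Set.Icc 0 1))
    (hx' : ∀ q ∈ Set.Icc (0 : ℝ) 1, 0 < derivWithin x (Set.Icc 0 1) q)
    (ψ : ℝ → ℝ → ℝ)
    (hψ : ψ = fun h q =>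
      -(((u (x (q + h)) - u (x q)) / (x (q + h) - x q)
            - (u (x q) - u (x (q - h))) / (x q - x (q - h)))
          / (((x (q + h) - x q) + (x q - x (q - h))) / 2))
        + lam ^ 2 * u (x q)) :
    (∃ C > 0, ∀ h ∈ Set.Ioc (0 : ℝ) (1 / 2), ∀ q ∈ Set.Icc h (1 - h),
      |ψ h q
          + h ^ 2 / 3 * (iteratedDerivWithin 2 x (Set.Icc 0 1) q * iteratedDeriv 3 u (x q)
              + 1 / 4 * (derivWithin x (Set.Icc 0 1) q) ^ 2 * iteratedDeriv 4 u (x q))|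
        ≤ C * h ^ 4) ∧
    ∃ C' > 0, ∀ h ∈ Set.Ioc (0 : ℝ) (1 / 2), ∀ q ∈ Set.Icc h (1 - h),
      |ψ h q| ≤ C' * h ^ 2 :=
  stmt_13_general lam u hu hode x hx hx' ψ hψ
end

section
/- Let u be four times continuously differentiable on an interval containing the range of a twice continuously differentiable mapping x : [0, 1] → ℝ, and assume u'''(x(q)) > 0 for all q ∈ [0, 1]. Then for every q ∈ [0, 1], d/dq[ (u'''(x(q)))^{1/4} · x'(q) ] = (u'''(x(q)))^{−3/4} · ( x''(q)·u'''(x(q)) + (1/4)·(x'(q))²·u''''(x(q)) ). Consequently, the fourth-order condition x''(q)·u'''(x(q)) + (1/4)·(x'(q))²·u''''(x(q)) = 0 on [0, 1] holds if and only if (u'''(x(q)))^{1/4}·x'(q) is constant on [0, 1], i.e. if and only if x equidistributes the monitor function ω(y) = (u'''(y))^{1/4}. -/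
/-!
With `v = u''' ∘ x`, the product and chain rules give `(v ^ (1/4) * x')' = v ^ (-3/4) * (x'' * v +
1/4 * x' * v')` and `v' = u'''' (x) * x'`. As `v > 0` the factor `v ^ (-3/4)` never vanishes, so
the fourth-order condition says exactly that `v ^ (1/4) * x'` has zero derivative on `[0, 1]`,
i.e. that it is constant there.
-/

open Set

theorem ContDiffOn.hasDerivWithinAt_iteratedDerivWithin {𝕜 F : Type*} [NontriviallyNormedField 𝕜]
    [NormedAddCommGroup F] [NormedSpace 𝕜 F] {f : 𝕜 → F} {s : Set 𝕜} {n : WithTop ℕ∞} {m : ℕ}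
    {y : 𝕜} (hf : ContDiffOn 𝕜 n f s) (hmn : m < n) (hs : UniqueDiffOn 𝕜 s) (hy : y ∈ s) :
    HasDerivWithinAt (iteratedDerivWithin m f s) (iteratedDerivWithin (m + 1) f s y) s y := by
  rw [iteratedDerivWithin_succ]
  exact (hf.differentiableOn_iteratedDerivWithin hmn hs y hy).hasDerivWithinAt

theorem HasDerivWithinAt.rpow_const_mul {v w : ℝ → ℝ} {v' w' p t : ℝ} {s : Set ℝ}
    (hv : HasDerivWithinAt v v' s t) (hw : HasDerivWithinAt w w' s t) (hpos : 0 < v t) :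
    HasDerivWithinAt (fun r => v r ^ p * w r) (v t ^ (p - 1) * (w' * v t + p * w t * v')) s t := by
  refine ((hv.rpow_const (p := p) (Or.inl hpos.ne')).mul hw).congr_deriv ?_
  rw [Real.rpow_sub_one hpos.ne']
  field_simp
  ring

theorem exists_forall_Icc_eq_iff_of_hasDerivWithinAt {g g' : ℝ → ℝ} {a b : ℝ} (hab : a < b)
    (hg : ∀ t ∈ Icc a b, HasDerivWithinAt g (g' t) (Icc a b) t) :
    (∃ c, ∀ t ∈ Icc a b, g t = c) ↔ ∀ t ∈ Icc a b, g' t = 0 := by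
  constructor
  · rintro ⟨c, hc⟩ t ht
    have hzero : HasDerivWithinAt g 0 (Icc a b) t :=
      (hasDerivWithinAt_const t _ c).congr_of_mem hc ht
    exact (uniqueDiffOn_Icc hab t ht).eq_deriv _ (hg t ht) hzero
  · intro h
    refine ⟨g a, constant_of_derivWithin_zero (fun t ht => (hg t ht).differentiableWithinAt)
      fun t ht => ?_⟩
    have ht' := Ico_subset_Icc_self ht
    rw [(hg t ht').derivWithin (uniqueDiffOn_Icc hab t ht'), h t ht']

/-- for u four times continuously differentiable on an interval [a,b]
containing the range of a C² mapping x : [0,1] → ℝ, with u'''(x(q)) > 0 on [0,1],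
d/dq[(u'''(x(q)))^{1/4}·x'(q)] = (u'''(x(q)))^{−3/4}·(x''(q)·u'''(x(q)) + (1/4)·(x'(q))²·u''''(x(q))),
and the fourth-order condition holds on [0,1] iff (u'''(x(q)))^{1/4}·x'(q) is constant,
i.e. iff x equidistributes the monitor ω = (u''')^{1/4}. -/
theorem stmt_15 (a b : ℝ) (hab : a < b) (u x : ℝ → ℝ)
    (hu : ContDiffOn ℝ 4 u (Set.Icc a b))
    (hx : ContDiffOn ℝ 2 x (Set.Icc 0 1))
    (hmap : Set.MapsTo x (Set.Icc 0 1) (Set.Icc a b))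
    (hpos : ∀ q ∈ Set.Icc (0 : ℝ) 1, 0 < iteratedDerivWithin 3 u (Set.Icc a b) (x q)) :
    (∀ q ∈ Set.Icc (0 : ℝ) 1,
      derivWithin
          (fun s => iteratedDerivWithin 3 u (Set.Icc a b) (x s) ^ ((1 : ℝ) / 4)
            * derivWithin x (Set.Icc 0 1) s) (Set.Icc 0 1) q
        = iteratedDerivWithin 3 u (Set.Icc a b) (x q) ^ (-(3 : ℝ) / 4)
            * (iteratedDerivWithin 2 x (Set.Icc 0 1) q
                  * iteratedDerivWithin 3 u (Set.Icc a b) (x q)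
                + 1 / 4 * (derivWithin x (Set.Icc 0 1) q) ^ 2
                  * iteratedDerivWithin 4 u (Set.Icc a b) (x q))) ∧
    ((∀ q ∈ Set.Icc (0 : ℝ) 1,
        iteratedDerivWithin 2 x (Set.Icc 0 1) q * iteratedDerivWithin 3 u (Set.Icc a b) (x q)
          + 1 / 4 * (derivWithin x (Set.Icc 0 1) q) ^ 2
              * iteratedDerivWithin 4 u (Set.Icc a b) (x q) = 0)
      ↔ ∃ c : ℝ, ∀ q ∈ Set.Icc (0 : ℝ) 1,
          iteratedDerivWithin 3 u (Set.Icc a b) (x q) ^ ((1 : ℝ) / 4)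
            * derivWithin x (Set.Icc 0 1) q = c) := by
  have hI : UniqueDiffOn ℝ (Icc (0 : ℝ) 1) := uniqueDiffOn_Icc one_pos
  have hderiv : ∀ q ∈ Icc (0 : ℝ) 1, HasDerivWithinAt
      (fun s => iteratedDerivWithin 3 u (Icc a b) (x s) ^ ((1 : ℝ) / 4) * derivWithin x (Icc 0 1) s)
      (iteratedDerivWithin 3 u (Icc a b) (x q) ^ (-(3 : ℝ) / 4)
        * (iteratedDerivWithin 2 x (Icc 0 1) q * iteratedDerivWithin 3 u (Icc a b) (x q)
          + 1 / 4 * derivWithin x (Icc 0 1) q ^ 2 * iteratedDerivWithin 4 u (Icc a b) (x q)))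
      (Icc 0 1) q := by
    intro q hq
    have hx' : HasDerivWithinAt x (derivWithin x (Icc 0 1) q) (Icc 0 1) q :=
      (hx.differentiableOn two_ne_zero q hq).hasDerivWithinAt
    have hx'' := hx.hasDerivWithinAt_iteratedDerivWithin (m := 1) (by norm_num) hI hq
    rw [iteratedDerivWithin_one] at hx''
    have hu''' := (hu.hasDerivWithinAt_iteratedDerivWithin (m := 3) (by norm_num)
      (uniqueDiffOn_Icc hab) (hmap hq)).comp q hx' hmap
    refine (hu'''.rpow_const_mul hx'' (hpos q hq)).congr_deriv ?_
    rw [Function.comp_apply, show (1 : ℝ) / 4 - 1 = -3 / 4 by norm_num]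
    ring
  refine ⟨fun q hq => (hderiv q hq).derivWithin (hI q hq), ?_⟩
  rw [exists_forall_Icc_eq_iff_of_hasDerivWithinAt one_pos hderiv]
  refine forall₂_congr fun q hq => ?_
  rw [mul_eq_zero, or_iff_right (Real.rpow_pos_of_pos (hpos q hq) _).ne']
end

section
/- Let λ > 0 and ℓ > 0, let u(y) = exp(λ(y − ℓ)), and let x(q) = ℓ + (4/λ)·ln(q + (1 − q)·exp(−λℓ/4)) for q ∈ [0, 1]. Then the fourth-order condition x''(q)·u'''(x(q)) + (1/4)·(x'(q))²·u''''(x(q)) = 0 holds for every q ∈ [0, 1]. -/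
/-!
For an affine `g` one has `(log g)'' = -((log g)')²`, so the map `x = ℓ + (4/λ) log g` satisfies
`x'' = -(λ/4) x'²`, while every derivative of `u = exp (λ (· - ℓ))` is `λ` times the previous one.
Hence `x'' u''' + ¼ x'² u'''' = x'² u''' (-λ/4 + λ/4) = 0`.
-/

open Real Filter Topology

lemma iteratedDeriv_exp_mul_sub (lam ℓ : ℝ) (n : ℕ) :
    iteratedDeriv n (fun y => exp (lam * (y - ℓ))) = fun y => lam ^ n * exp (lam * (y - ℓ)) := by
  rw [iteratedDeriv_comp_sub_const (f := fun s => exp (lam * s)), iteratedDeriv_exp_const_mul]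

section LogAffine

variable {α β q : ℝ}

lemma hasDerivAt_affine : HasDerivAt (fun q => α + β * q) β q := by
  simpa using ((hasDerivAt_id q).const_mul β).const_add α

lemma hasDerivAt_log_affine (h : α + β * q ≠ 0) :
    HasDerivAt (fun q => log (α + β * q)) (β / (α + β * q)) q := by
  rw [div_eq_inv_mul]
  exact (hasDerivAt_log h).comp q hasDerivAt_affine

lemma iteratedDeriv_two_log_affine (h : α + β * q ≠ 0) :
    iteratedDeriv 2 (fun q => log (α + β * q)) q = -(β / (α + β * q)) ^ 2 := by
  have hnhds : ∀ᶠ r in 𝓝 q, α + β * r ≠ 0 :=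
    (continuous_const.add (continuous_const.mul continuous_id)).continuousAt.eventually_ne h
  have hderiv : deriv (fun q => log (α + β * q)) =ᶠ[𝓝 q] fun r => β / (α + β * r) :=
    hnhds.mono fun r hr => (hasDerivAt_log_affine hr).deriv
  rw [iteratedDeriv_succ, iteratedDeriv_one, hderiv.deriv_eq]
  refine ((hasDerivAt_const q β).div hasDerivAt_affine h).deriv.trans ?_
  rw [div_pow]
  ring

end LogAffine

theorem stmt_16_general (lam ℓ : ℝ)
    (u x : ℝ → ℝ)
    (hu : u = fun y : ℝ => Real.exp (lam * (y - ℓ)))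
    (hx : x = fun q : ℝ => ℓ + 4 / lam * Real.log (q + (1 - q) * Real.exp (-(lam * ℓ) / 4))) :
    ∀ q ∈ Set.Icc (0 : ℝ) 1,
      iteratedDeriv 2 x q * iteratedDeriv 3 u (x q)
        + 1 / 4 * (deriv x q) ^ 2 * iteratedDeriv 4 u (x q) = 0 := by
  rintro q ⟨hq0, hq1⟩
  set a := exp (-(lam * ℓ) / 4)
  have hx' : x = fun q => ℓ + 4 / lam * log (a + (1 - a) * q) := by
    rw [hx]; funext r; rw [show r + (1 - r) * a = a + (1 - a) * r by ring]
  have hg : a + (1 - a) * q ≠ 0 := by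
    have ha : 0 < a := exp_pos _
    rcases hq0.eq_or_lt with rfl | hq
    · simpa using ha.ne'
    · nlinarith [mul_nonneg ha.le (sub_nonneg.2 hq1)]
  have hx1 : deriv x q = 4 / lam * ((1 - a) / (a + (1 - a) * q)) := by
    rw [hx', deriv_const_add, deriv_const_mul_field, (hasDerivAt_log_affine hg).deriv]
  have hx2 : iteratedDeriv 2 x q = 4 / lam * -((1 - a) / (a + (1 - a) * q)) ^ 2 := by
    rw [hx', iteratedDeriv_const_add two_pos, iteratedDeriv_const_mul_field,
      iteratedDeriv_two_log_affine hg]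
  simp only [hu, iteratedDeriv_exp_mul_sub, hx1, hx2]
  -- `λ * λ * λ⁻¹ = λ` holds also at `λ = 0`, where `4 / λ = 0` makes `x` constant.
  linear_combination (4 * ((1 - a) / (a + (1 - a) * q)) ^ 2 * exp (lam * (x q - ℓ)) * lam ^ 2
    * lam⁻¹) * mul_self_mul_inv lam

/-- for u(y) = exp(λ(y − ℓ)) and
x(q) = ℓ + (4/λ)·ln(q + (1 − q)·exp(−λℓ/4)), the fourth-order condition
x''(q)·u'''(x(q)) + (1/4)·(x'(q))²·u''''(x(q)) = 0 holds for every q ∈ [0, 1]. -/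
theorem stmt_16 (lam ℓ : ℝ) (hlam : 0 < lam) (hℓ : 0 < ℓ)
    (u x : ℝ → ℝ)
    (hu : u = fun y : ℝ => Real.exp (lam * (y - ℓ)))
    (hx : x = fun q : ℝ => ℓ + 4 / lam * Real.log (q + (1 - q) * Real.exp (-(lam * ℓ) / 4))) :
    ∀ q ∈ Set.Icc (0 : ℝ) 1,
      iteratedDeriv 2 x q * iteratedDeriv 3 u (x q)
        + 1 / 4 * (deriv x q) ^ 2 * iteratedDeriv 4 u (x q) = 0 :=
  stmt_16_general lam ℓ u x hu hx
end

section
/- Let λ > 0 and ℓ > 0, let u(y) = exp(λ(y − ℓ)), and let x(q) = ℓ + (4/λ)·ln(q + (1 − q)·exp(−λℓ/4)) for q ∈ [0, 1]. Then there exists a constant C > 0 such that for all h ∈ (0, 1/2] and all q ∈ [h, 1 − h], the consistency error of the central difference scheme on the non-uniform grid generated by x satisfies |ψ_h(q)| ≤ C·h⁴, where ψ_h(q) := −[ (u(x(q+h)) − u(x(q)))/h₊ − (u(x(q)) − u(x(q−h)))/h₋ ] / ((h₊ + h₋)/2) + λ²·u(x(q)), h₊ = x(q+h) − x(q), h₋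 = x(q) − x(q−h). Thus the second-order central difference scheme is fourth-order consistent on the equidistributed grid for the monitor function ω(y) = (u'(y))^{1/4}. -/
/-!
With `a = exp (-λℓ/4)` and `G q = a + (1 - a) q` the grid map is `x q = ℓ + (4/λ) log (G q)`,
so `u (x q) = (G q)⁴`. At a node with `G q = g` the stencil values of `G` are `g (1 - t)`, `g`,
`g (1 + t)` with `t = (1 - a) h / g`, and the two steps are `(4/λ) s`, `(4/λ) r` with
`s = log (1 + t)`, `r = -log (1 - t)`. Hence `ψ = λ² g⁴ N / (8 (s + r) s r)`. The denominator is
of order `t³`, while substituting the degree-six Taylor polynomials of the logarithms into `N`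
leaves `t⁷` times a bounded polynomial, so `N = O(t⁷)` and `ψ = O(λ² (g t)⁴) = O(h⁴)`. The
constants degenerate only as `t → 1`, and `1 - t ≥ a` keeps them bounded.
-/

open Real Finset

noncomputable def logTaylor (n : ℕ) (t : ℝ) : ℝ := ∑ i ∈ range n, t ^ (i + 1) / (i + 1)

lemma abs_neg_log_one_sub_sub_logTaylor_le {t : ℝ} (ht : |t| < 1) (n : ℕ) :
    |-log (1 - t) - logTaylor n t| ≤ |t| ^ (n + 1) / (1 - |t|) := by
  rw [← abs_neg]
  convert abs_log_sub_add_sum_range_le ht n using 2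
  rw [logTaylor]; ring

lemma abs_logTaylor_le {t : ℝ} (ht : |t| ≤ 1) (n : ℕ) : |logTaylor n t| ≤ n := by
  calc |logTaylor n t| ≤ ∑ i ∈ range n, |t ^ (i + 1) / (i + 1)| := abs_sum_le_sum_abs _ _
    _ ≤ ∑ _i ∈ range n, (1 : ℝ) := by
      gcongr with i
      rw [abs_div, abs_pow, div_le_one (by positivity)]
      calc |t| ^ (i + 1) ≤ 1 := pow_le_one₀ (abs_nonneg t) ht
        _ ≤ |(i : ℝ) + 1| := (le_add_of_nonneg_left i.cast_nonneg).trans (le_abs_self _)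
    _ = n := by simp

/-- Numerator of the consistency error, in the step sizes `s = log (1 + t)`, `r = -log (1 - t)`
measured in units of `4 / λ`. -/
noncomputable def defectNumerator (t s r : ℝ) : ℝ :=
  8 * (s + r) * (s * r) - ((1 + t) ^ 4 - 1) * r + (1 - (1 - t) ^ 4) * s

lemma defectNumerator_logTaylor (t : ℝ) :
    defectNumerator t (-logTaylor 6 (-t)) (logTaylor 6 t) = t ^ 7 *
      (16/5 - 73/135*t^2 - 83/225*t^4 - 221/225*t^6 - 968/3375*t^8 - 4/45*t^10) := by
  simp only [defectNumerator, logTaylor, sum_range_succ, sum_range_zero]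
  push_cast
  ring

lemma abs_defectNumerator_logTaylor_le {t : ℝ} (ht0 : 0 ≤ t) (ht1 : t ≤ 1) :
    |defectNumerator t (-logTaylor 6 (-t)) (logTaylor 6 t)| ≤ 6 * t ^ 7 := by
  have hp : |16/5 - 73/135*t^2 - 83/225*t^4 - 221/225*t^6 - 968/3375*t^8 - 4/45*t^10| ≤ 6 := by
    have h := fun n : ℕ => pow_le_one₀ (n := n) ht0 ht1
    have h' := fun n : ℕ => pow_nonneg (n := n) ht0
    rw [abs_le]; constructor <;> linarith [h 2, h 4, h 6, h 8, h 10, h' 2, h' 4, h' 6, h' 8, h' 10]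
  rw [defectNumerator_logTaylor, abs_mul, abs_of_nonneg (by positivity), mul_comm]
  gcongr

lemma abs_add_mul_mul_sub_le {s r S R M : ℝ} (hs : |s| ≤ M) (hr : |r| ≤ M) (hS : |S| ≤ M)
    (hR : |R| ≤ M) :
    |(s + r) * (s * r) - (S + R) * (S * R)| ≤ 3 * M ^ 2 * (|s - S| + |r - R|) := by
  have hM : 0 ≤ M := (abs_nonneg s).trans hs
  have h1 : |(s + S) * r + R ^ 2| ≤ 3 * M ^ 2 := by
    calc |(s + S) * r + R ^ 2| ≤ (|s| + |S|) * |r| + |R| ^ 2 := by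
          refine (abs_add_le _ _).trans ?_
          rw [abs_mul, abs_pow]; gcongr; exact abs_add_le _ _
      _ ≤ (M + M) * M + M ^ 2 := by gcongr
      _ = 3 * M ^ 2 := by ring
  have h2 : |S ^ 2 + s * (r + R)| ≤ 3 * M ^ 2 := by
    calc |S ^ 2 + s * (r + R)| ≤ |S| ^ 2 + |s| * (|r| + |R|) := by
          refine (abs_add_le _ _).trans ?_
          rw [abs_mul, abs_pow]; gcongr; exact abs_add_le _ _
      _ ≤ M ^ 2 + M * (M + M) := by gcongr
      _ = 3 * M ^ 2 := by ring
  calc |(s + r) * (s * r) - (S + R) * (S * R)|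
      = |(s - S) * ((s + S) * r + R ^ 2) + (r - R) * (S ^ 2 + s * (r + R))| := by ring_nf
    _ ≤ |s - S| * (3 * M ^ 2) + |r - R| * (3 * M ^ 2) := by
      refine (abs_add_le _ _).trans ?_
      rw [abs_mul, abs_mul]; gcongr
    _ = 3 * M ^ 2 * (|s - S| + |r - R|) := by ring

lemma abs_defectNumerator_sub_le {t s r S R M : ℝ} (ht0 : 0 ≤ t) (ht1 : t ≤ 1) (hs : |s| ≤ M)
    (hr : |r| ≤ M) (hS : |S| ≤ M) (hR : |R| ≤ M) :
    |defectNumerator t s r - defectNumerator t S R| ≤ (24 * M ^ 2 + 15) * (|s - S| + |r - R|) := by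
  have hA : |(1 + t) ^ 4 - 1| ≤ 15 := by
    have : (1 + t) ^ 4 ≤ 2 ^ 4 := by gcongr; linarith
    rw [abs_of_nonneg (by nlinarith [one_le_pow₀ (n := 4) (by linarith : (1 : ℝ) ≤ 1 + t)])]
    linarith
  have hB : |1 - (1 - t) ^ 4| ≤ 15 := by
    have := pow_le_one₀ (n := 4) (by linarith : (0 : ℝ) ≤ 1 - t) (by linarith)
    rw [abs_of_nonneg (by linarith)]
    linarith [pow_nonneg (n := 4) (by linarith : (0 : ℝ) ≤ 1 - t)]
  have hcubic := abs_add_mul_mul_sub_le hs hr hS hR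
  calc |defectNumerator t s r - defectNumerator t S R|
      = |8 * ((s + r) * (s * r) - (S + R) * (S * R)) - ((1 + t) ^ 4 - 1) * (r - R)
          + (1 - (1 - t) ^ 4) * (s - S)| := by rw [defectNumerator, defectNumerator]; ring_nf
    _ ≤ 8 * |(s + r) * (s * r) - (S + R) * (S * R)| + |(1 + t) ^ 4 - 1| * |r - R|
          + |1 - (1 - t) ^ 4| * |s - S| := by
      refine (abs_add_le _ _).trans (add_le_add ((abs_sub _ _).trans ?_) (abs_mul _ _).le)
      rw [abs_mul, abs_mul, abs_of_pos (by norm_num : (0 : ℝ) < 8)]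
    _ ≤ 8 * (3 * M ^ 2 * (|s - S| + |r - R|)) + 15 * |r - R| + 15 * |s - S| := by gcongr
    _ = (24 * M ^ 2 + 15) * (|s - S| + |r - R|) := by ring

lemma abs_defectNumerator_log_le {t : ℝ} (ht0 : 0 < t) (ht1 : t < 1) :
    |defectNumerator t (log (1 + t)) (-log (1 - t))| ≤ 1764 * t ^ 7 / (1 - t) ^ 3 := by
  have h1t : 0 < 1 - t := by linarith
  set k := (1 - t)⁻¹ with hk
  have hk1 : 1 ≤ k := one_le_inv₀ h1t |>.mpr (by linarith)
  have htk : |t| < 1 := by rw [abs_of_pos ht0]; exact ht1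
  have hs0 : 0 ≤ log (1 + t) := log_nonneg (by linarith)
  have hs1 : log (1 + t) ≤ t := by linarith [log_le_sub_one_of_pos (by linarith : 0 < 1 + t)]
  have hr0 : 0 ≤ -log (1 - t) := by linarith [log_nonpos h1t.le (by linarith)]
  have hr1 : -log (1 - t) ≤ k := by linarith [one_sub_inv_le_log_of_pos h1t]
  have hM : ∀ y, |y| ≤ 6 → |y| ≤ 6 * k := fun y hy => hy.trans (by linarith)
  have hS := abs_logTaylor_le (t := -t) (by rw [abs_neg]; exact htk.le) 6
  have hR := abs_logTaylor_le htk.le 6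
  have hsS : |log (1 + t) - -logTaylor 6 (-t)| ≤ t ^ 7 * k := by
    have := abs_neg_log_one_sub_sub_logTaylor_le (t := -t) (by rwa [abs_neg]) 6
    rw [abs_neg, abs_of_pos ht0, sub_neg_eq_add, ← abs_neg] at this
    convert this using 2 <;> ring
  have hrR : |-log (1 - t) - logTaylor 6 t| ≤ t ^ 7 * k := by
    have := abs_neg_log_one_sub_sub_logTaylor_le htk 6
    rwa [abs_of_pos ht0, div_eq_mul_inv] at this
  have hdiff := abs_defectNumerator_sub_le (S := -logTaylor 6 (-t)) ht0.le ht1.le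
    (hM _ (by rw [abs_of_nonneg hs0]; linarith)) (by rw [abs_of_nonneg hr0]; linarith)
    (hM _ (by rw [abs_neg]; exact_mod_cast hS)) (hM _ (by exact_mod_cast hR))
  have htaylor := abs_defectNumerator_logTaylor_le ht0.le ht1.le
  have ht7 : 0 ≤ t ^ 7 := by positivity
  calc |defectNumerator t (log (1 + t)) (-log (1 - t))|
      ≤ |defectNumerator t (log (1 + t)) (-log (1 - t))
          - defectNumerator t (-logTaylor 6 (-t)) (logTaylor 6 t)|
        + |defectNumerator t (-logTaylor 6 (-t)) (logTaylor 6 t)| :=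
          sub_le_iff_le_add.mp (abs_sub_abs_le_abs_sub _ _)
    _ ≤ (24 * (6 * k) ^ 2 + 15) * (t ^ 7 * k + t ^ 7 * k) + 6 * t ^ 7 := by
          gcongr; exact hdiff.trans (by gcongr)
    _ ≤ 1764 * t ^ 7 * k ^ 3 := by
      nlinarith [mul_le_mul_of_nonneg_left (show 1 ≤ k ^ 2 by nlinarith) ht7,
        mul_le_mul_of_nonneg_left (show 1 ≤ k ^ 3 by nlinarith) ht7,
        mul_le_mul_of_nonneg_left (show k ≤ k ^ 3 by nlinarith) ht7]
    _ = 1764 * t ^ 7 / (1 - t) ^ 3 := by rw [hk, inv_pow, div_eq_mul_inv]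

lemma six_mul_pow_three_le_log {t : ℝ} (ht0 : 0 < t) (ht1 : t < 1) :
    6 * t ^ 3 ≤ 8 * (log (1 + t) + -log (1 - t)) * (log (1 + t) * -log (1 - t)) := by
  have hs : t / 2 ≤ log (1 + t) :=
    calc t / 2 ≤ t / (1 + t) := div_le_div_of_nonneg_left ht0.le (by linarith) (by linarith)
      _ = 1 - (1 + t)⁻¹ := by field_simp; ring
      _ ≤ log (1 + t) := one_sub_inv_le_log_of_pos (by linarith)
  have hr : t ≤ -log (1 - t) := by linarith [log_le_sub_one_of_pos (by linarith : 0 < 1 - t)]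
  have hsr : t / 2 * t ≤ log (1 + t) * -log (1 - t) := mul_le_mul hs hr ht0.le (by linarith)
  nlinarith [mul_le_mul (by linarith : 3 * t / 2 ≤ log (1 + t) + -log (1 - t)) hsr
    (by positivity) (by linarith)]

lemma abs_defectNumerator_div_le {t : ℝ} (ht0 : 0 < t) (ht1 : t < 1) :
    |defectNumerator t (log (1 + t)) (-log (1 - t))
        / (8 * (log (1 + t) + -log (1 - t)) * (log (1 + t) * -log (1 - t)))|
      ≤ 294 * t ^ 4 / (1 - t) ^ 3 := by
  have hden := six_mul_pow_three_le_log ht0 ht1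
  have hpos : 0 < 8 * (log (1 + t) + -log (1 - t)) * (log (1 + t) * -log (1 - t)) :=
    lt_of_lt_of_le (by positivity) hden
  rw [abs_div, abs_of_pos hpos, div_le_iff₀ hpos]
  calc |defectNumerator t (log (1 + t)) (-log (1 - t))|
      ≤ 1764 * t ^ 7 / (1 - t) ^ 3 := abs_defectNumerator_log_le ht0 ht1
    _ = 294 * t ^ 4 / (1 - t) ^ 3 * (6 * t ^ 3) := by ring
    _ ≤ _ := by gcongr

lemma centralDifference_pow_four_eq {lam g t s r xm x0 xp : ℝ} (hlam : lam ≠ 0) (hs : s ≠ 0)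
    (hr : r ≠ 0) (hsr : s + r ≠ 0) (hp : xp - x0 = 4 / lam * s) (hm : x0 - xm = 4 / lam * r) :
    -((((g * (1 + t)) ^ 4 - g ^ 4) / (xp - x0) - (g ^ 4 - (g * (1 - t)) ^ 4) / (x0 - xm))
        / (((xp - x0) + (x0 - xm)) / 2)) + lam ^ 2 * g ^ 4
      = lam ^ 2 * g ^ 4 * (defectNumerator t s r / (8 * (s + r) * (s * r))) := by
  rw [hp, hm, defectNumerator]
  field_simp
  ring

lemma exp_mul_grid_sub_eq_pow_four {lam : ℝ} (ℓ : ℝ) {G : ℝ} (hlam : lam ≠ 0) (hG : 0 < G) :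
    exp (lam * (ℓ + 4 / lam * log G - ℓ)) = G ^ 4 := by
  rw [show lam * (ℓ + 4 / lam * log G - ℓ) = log (G ^ 4) by rw [log_pow]; field_simp; ring,
    exp_log (by positivity)]

lemma exists_geometric_nodes {a h q : ℝ} (ha0 : 0 < a) (ha1 : a < 1) (hh0 : 0 < h) (hhq : h ≤ q)
    (hqh : q ≤ 1 - h) :
    ∃ g t, 0 < g ∧ 0 < t ∧ a ≤ 1 - t ∧ g * t = (1 - a) * h ∧ q + (1 - q) * a = g ∧
      q + h + (1 - (q + h)) * a = g * (1 + t) ∧ q - h + (1 - (q - h)) * a = g * (1 - t) := by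
  set g := q + (1 - q) * a
  have hg0 : 0 < g := by nlinarith
  have hhg : h ≤ g := by nlinarith
  have hgt : g * ((1 - a) * h / g) = (1 - a) * h := mul_div_cancel₀ _ hg0.ne'
  refine ⟨g, (1 - a) * h / g, hg0, div_pos (mul_pos (by linarith) hh0) hg0, ?_, hgt, rfl,
    by rw [mul_add, hgt]; ring, by rw [mul_sub, hgt]; ring⟩
  exact le_of_mul_le_mul_right
    (by nlinarith [mul_le_mul_of_nonneg_left hhg (sub_nonneg.mpr ha1.le)]) hg0

/-- supraconvergence on the equidistributed grid. For
u(y) = exp(λ(y − ℓ)) and x(q) = ℓ + (4/λ)·ln(q + (1 − q)·exp(−λℓ/4)) (the grid mapping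
equidistributing ω = (u')^{1/4}), the consistency error of the central difference
scheme on the non-uniform grid generated by x satisfies |ψ_h(q)| ≤ C·h⁴ uniformly for
h ∈ (0,1/2], q ∈ [h, 1−h]: the scheme is fourth-order consistent. -/
theorem stmt_17 (lam ℓ : ℝ) (hlam : 0 < lam) (hℓ : 0 < ℓ)
    (u x : ℝ → ℝ)
    (hu : u = fun y : ℝ => Real.exp (lam * (y - ℓ)))
    (hx : x = fun q : ℝ => ℓ + 4 / lam * Real.log (q + (1 - q) * Real.exp (-(lam * ℓ) / 4)))
    (ψ : ℝ → ℝ → ℝ)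
    (hψ : ψ = fun h q =>
      -(((u (x (q + h)) - u (x q)) / (x (q + h) - x q)
            - (u (x q) - u (x (q - h))) / (x q - x (q - h)))
          / (((x (q + h) - x q) + (x q - x (q - h))) / 2))
        + lam ^ 2 * u (x q)) :
    ∃ C > 0, ∀ h ∈ Set.Ioc (0 : ℝ) (1 / 2), ∀ q ∈ Set.Icc h (1 - h),
      |ψ h q| ≤ C * h ^ 4 := by
  subst hu hx hψ
  set a := exp (-(lam * ℓ) / 4)
  have ha0 : 0 < a := exp_pos _
  have ha1 : a < 1 := exp_lt_one_iff.mpr (by nlinarith)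
  have h1a : 0 < 1 - a := by linarith
  refine ⟨294 * lam ^ 2 * (1 - a) ^ 4 / a ^ 3, by positivity, ?_⟩
  rintro h ⟨hh0, -⟩ q ⟨hhq, hqh⟩
  obtain ⟨g, t, hg0, ht0, hta, hgt, hq, hplus, hminus⟩ := exists_geometric_nodes ha0 ha1 hh0 hhq hqh
  have ht1 : t < 1 := by linarith
  have hs := log_pos (by linarith : 1 < 1 + t)
  have hr := neg_pos.mpr (log_neg (by linarith : 0 < 1 - t) (by linarith))
  simp only [hq, hplus, hminus]
  rw [exp_mul_grid_sub_eq_pow_four ℓ hlam.ne' hg0,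
    exp_mul_grid_sub_eq_pow_four ℓ hlam.ne' (by positivity : 0 < g * (1 + t)),
    exp_mul_grid_sub_eq_pow_four ℓ hlam.ne' (mul_pos hg0 (by linarith : 0 < 1 - t)),
    centralDifference_pow_four_eq hlam.ne' hs.ne' hr.ne' (by positivity)
      (by rw [log_mul hg0.ne' (by positivity)]; ring)
      (by rw [log_mul hg0.ne' (by linarith)]; ring),
    abs_mul, abs_of_nonneg (by positivity)]
  calc lam ^ 2 * g ^ 4 * |_| ≤ lam ^ 2 * g ^ 4 * (294 * t ^ 4 / (1 - t) ^ 3) := by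
        gcongr; exact abs_defectNumerator_div_le ht0 ht1
    _ = 294 * lam ^ 2 * (g * t) ^ 4 / (1 - t) ^ 3 := by ring
    _ ≤ 294 * lam ^ 2 * (1 - a) ^ 4 / a ^ 3 * h ^ 4 := by
        rw [hgt, mul_pow, ← mul_assoc, mul_div_right_comm]
        gcongr
end
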